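/- arXiv:1512.04219 — 2 statements merged into one kernel-verified Lean document; each statement's English description precedes it below -/
import Mathlib

section
/- Rodrigues' rotation theorem (trace form): let a_A, a_B ∈ ℝ³ be unit vectors and α, β ∈ ℝ. Then the trace of the composed rotation exp(S(β·a_B)) · exp(S(α·a_A)) equals 4c² − 1, where c = cos(α/2)·cos(β/2) − sin(α/2)·sin(β/2)·⟨a_A, a_B⟩. Equivalently, the cosine of the rotation angle of the composition is 2c² − 1, so the composed rotation has angle 2·arccos|c|. -/
/-!
For a unit vector `a` we have `skew a ^ 3 = -skew a`, so in the exponential series of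
`t • skew a` the odd powers are `±skew a` and the even powers after the zeroth are `±skew a ^ 2`:
the series splits into the sine and cosine series and gives Rodrigues' formula
`exp (skew (t • a)) = 1 + sin t • skew a + (1 - cos t) • skew a ^ 2`. The trace of a product of
two such matrices is a polynomial in the sines, cosines and `d = ⟪a_A, a_B⟫`, which the
double-angle formulas turn into `4 c ^ 2 - 1`. Finally
`c = (1 + d) / 2 * cos ((α + β) / 2) + (1 - d) / 2 * cos ((α - β) / 2)` is a convex combination
of cosines, so `|c| ≤ 1` and `arccos (2 c ^ 2 - 1) = 2 arccos |c|`.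
-/

open Real Matrix

noncomputable def skew (r : EuclideanSpace ℝ (Fin 3)) : Matrix (Fin 3) (Fin 3) ℝ :=
  !![0, -(r 2), r 1;
     r 2, 0, -(r 0);
     -(r 1), r 0, 0]

section PowThreeEqNeg

open scoped Nat

variable {𝔸 : Type*} [Ring 𝔸] [Algebra ℝ 𝔸] {A : 𝔸}

theorem pow_two_mul_add_one_of_pow_three_eq_neg (h : A ^ 3 = -A) (k : ℕ) :
    A ^ (2 * k + 1) = (-1 : ℝ) ^ k • A := by
  induction k with
  | zero => simp
  | succ k ih =>
    rw [show 2 * (k + 1) + 1 = 2 + (2 * k + 1) by ring, pow_add, ih, mul_smul_comm,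
      ← pow_succ, h, pow_succ, mul_neg_one, neg_smul, smul_neg]

theorem pow_two_mul_add_two_of_pow_three_eq_neg (h : A ^ 3 = -A) (k : ℕ) :
    A ^ (2 * k + 2) = (-1 : ℝ) ^ k • A ^ 2 := by
  rw [pow_succ, pow_two_mul_add_one_of_pow_three_eq_neg h, smul_mul_assoc, ← pow_two]

variable [TopologicalSpace 𝔸] [IsTopologicalRing 𝔸] [ContinuousSMul ℝ 𝔸] [T2Space 𝔸]

theorem exp_smul_of_pow_three_eq_neg (h : A ^ 3 = -A) (t : ℝ) :
    NormedSpace.exp (t • A) = 1 + sin t • A + (1 - cos t) • A ^ 2 := by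
  have heven : HasSum (fun k : ℕ => ((2 * k)! : ℝ)⁻¹ • (t • A) ^ (2 * k))
      (1 + (1 - cos t) • A ^ 2) := by
    have hcos := (hasSum_nat_add_iff' 1).mpr (Real.hasSum_cos t)
    rw [← hasSum_nat_add_iff' 1]
    convert (hcos.smul_const (A ^ 2)).neg using 1
    · funext k
      rw [smul_pow, mul_add, pow_two_mul_add_two_of_pow_three_eq_neg h, smul_smul, smul_smul,
        ← neg_smul]
      congr 1
      field_simp
      ring
    · simp [← neg_smul]
  rw [NormedSpace.exp_eq_tsum ℝ, add_right_comm]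
  refine (heven.even_add_odd ?_).tsum_eq
  convert (Real.hasSum_sin t).smul_const A using 2 with k
  rw [smul_pow, pow_two_mul_add_one_of_pow_three_eq_neg h, smul_smul, smul_smul]
  congr 1
  field_simp

end PowThreeEqNeg

theorem EuclideanSpace.norm_sq_eq_fin_three (r : EuclideanSpace ℝ (Fin 3)) :
    ‖r‖ ^ 2 = r 0 ^ 2 + r 1 ^ 2 + r 2 ^ 2 := by
  simp [EuclideanSpace.real_norm_sq_eq, Fin.sum_univ_three]

theorem EuclideanSpace.inner_eq_fin_three (a b : EuclideanSpace ℝ (Fin 3)) :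
    inner ℝ a b = a 0 * b 0 + a 1 * b 1 + a 2 * b 2 := by
  simp [PiLp.inner_apply, Fin.sum_univ_three, mul_comm]

theorem skew_smul (c : ℝ) (r : EuclideanSpace ℝ (Fin 3)) : skew (c • r) = c • skew r := by
  ext i j
  fin_cases i <;> fin_cases j <;> simp [skew]

theorem skew_pow_three (r : EuclideanSpace ℝ (Fin 3)) : skew r ^ 3 = -(‖r‖ ^ 2) • skew r := by
  rw [EuclideanSpace.norm_sq_eq_fin_three, pow_succ, pow_two]
  simp only [skew, mul_fin_three, smul_of, smul_vec3, smul_eq_mul]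
  congr <;> ring

theorem skew_pow_three_of_norm_eq_one {a : EuclideanSpace ℝ (Fin 3)} (ha : ‖a‖ = 1) :
    skew a ^ 3 = -skew a := by
  simp [skew_pow_three, ha]

theorem exp_skew_smul {a : EuclideanSpace ℝ (Fin 3)} (ha : ‖a‖ = 1) (t : ℝ) :
    NormedSpace.exp (skew (t • a)) = 1 + sin t • skew a + (1 - cos t) • skew a ^ 2 := by
  rw [skew_smul, exp_smul_of_pow_three_eq_neg (skew_pow_three_of_norm_eq_one ha)]

theorem trace_rodrigues_mul (a b : EuclideanSpace ℝ (Fin 3)) (sa ca sb cb : ℝ) :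
    trace ((1 + sb • skew b + (1 - cb) • skew b ^ 2) * (1 + sa • skew a + (1 - ca) • skew a ^ 2))
      = 3 - 2 * (1 - ca) * ‖a‖ ^ 2 - 2 * (1 - cb) * ‖b‖ ^ 2 - 2 * sa * sb * inner ℝ a b
        + (1 - ca) * (1 - cb) * (inner ℝ a b ^ 2 + ‖a‖ ^ 2 * ‖b‖ ^ 2) := by
  rw [EuclideanSpace.norm_sq_eq_fin_three, EuclideanSpace.norm_sq_eq_fin_three,
    EuclideanSpace.inner_eq_fin_three]
  simp only [skew, pow_two, one_fin_three, mul_fin_three, smul_of, smul_vec3, smul_eq_mul,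
    of_add_of, vec3_add, trace_fin_three, of_apply, cons_val_zero, cons_val_one, cons_val_two,
    head_cons, tail_cons]
  ring

theorem trace_exp_skew_smul_mul_exp_skew_smul {a b : EuclideanSpace ℝ (Fin 3)}
    (ha : ‖a‖ = 1) (hb : ‖b‖ = 1) (α β : ℝ) :
    trace (NormedSpace.exp (skew (β • b)) * NormedSpace.exp (skew (α • a)))
      = 4 * (cos (α / 2) * cos (β / 2) - sin (α / 2) * sin (β / 2) * inner ℝ a b) ^ 2 - 1 := by
  obtain ⟨x, rfl⟩ : ∃ x, α = 2 * x := ⟨α / 2, by ring⟩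
  obtain ⟨y, rfl⟩ : ∃ y, β = 2 * y := ⟨β / 2, by ring⟩
  rw [exp_skew_smul ha, exp_skew_smul hb, trace_rodrigues_mul, ha, hb,
    mul_div_cancel_left₀ x two_ne_zero, mul_div_cancel_left₀ y two_ne_zero,
    cos_two_mul, cos_two_mul, sin_two_mul, sin_two_mul]
  linear_combination -4 * inner ℝ a b ^ 2 * (sin y ^ 2 * sin_sq_add_cos_sq x
    + (1 - cos x ^ 2) * sin_sq_add_cos_sq y)

theorem abs_cos_mul_cos_sub_sin_mul_sin_mul_le_one (x y : ℝ) {d : ℝ} (hd : |d| ≤ 1) :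
    |cos x * cos y - sin x * sin y * d| ≤ 1 := by
  have hconv : cos x * cos y - sin x * sin y * d
      = (1 + d) / 2 * cos (x + y) + (1 - d) / 2 * cos (x - y) := by
    rw [cos_add, cos_sub]; ring
  obtain ⟨hd₁, hd₂⟩ := abs_le.mp hd
  have hp : 0 ≤ (1 + d) / 2 := by linarith
  have hm : 0 ≤ (1 - d) / 2 := by linarith
  rw [hconv]
  calc |(1 + d) / 2 * cos (x + y) + (1 - d) / 2 * cos (x - y)|
      ≤ (1 + d) / 2 * |cos (x + y)| + (1 - d) / 2 * |cos (x - y)| := by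
        refine (abs_add_le _ _).trans_eq ?_
        rw [abs_mul, abs_mul, abs_of_nonneg hp, abs_of_nonneg hm]
    _ ≤ (1 + d) / 2 + (1 - d) / 2 :=
        add_le_add (mul_le_of_le_one_right hp (abs_cos_le_one _))
          (mul_le_of_le_one_right hm (abs_cos_le_one _))
    _ = 1 := by ring

theorem arccos_two_mul_sq_sub_one {c : ℝ} (hc : |c| ≤ 1) :
    arccos (2 * c ^ 2 - 1) = 2 * arccos |c| := by
  have hcos : cos (2 * arccos |c|) = 2 * c ^ 2 - 1 := by
    rw [cos_two_mul, cos_arccos (by linarith [abs_nonneg c]) hc, sq_abs]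
  rw [← hcos, arccos_cos (by linarith [arccos_nonneg |c|])]
  linarith [arccos_le_pi_div_two.mpr (abs_nonneg c)]

theorem rodrigues_rotation_theorem_trace
    (aA aB : EuclideanSpace ℝ (Fin 3)) (hA : ‖aA‖ = 1) (hB : ‖aB‖ = 1) (α β : ℝ) :
    Matrix.trace (NormedSpace.exp (skew (β • aB)) * NormedSpace.exp (skew (α • aA)))
        = 4 * (Real.cos (α / 2) * Real.cos (β / 2)
            - Real.sin (α / 2) * Real.sin (β / 2) * (inner ℝ aA aB : ℝ)) ^ 2 - 1 ∧
    Real.arccos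
        ((Matrix.trace (NormedSpace.exp (skew (β • aB)) * NormedSpace.exp (skew (α • aA))) - 1) / 2)
      = 2 * Real.arccos |Real.cos (α / 2) * Real.cos (β / 2)
            - Real.sin (α / 2) * Real.sin (β / 2) * (inner ℝ aA aB : ℝ)| := by
  have htrace := trace_exp_skew_smul_mul_exp_skew_smul hA hB α β
  refine ⟨htrace, ?_⟩
  have hinner : |inner ℝ aA aB| ≤ 1 := by simpa [hA, hB] using abs_real_inner_le_norm aA aB
  rw [htrace, ← arccos_two_mul_sq_sub_one
    (abs_cos_mul_cos_sub_sin_mul_sin_mul_le_one (α / 2) (β / 2) hinner)]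
  congr 1
  ring
end

section
/- For all a, b ∈ [−π/2, π/2] and all d ∈ [0, 1]: (arccos(d·cos a + (1 − d)·cos b))² ≤ d·a² + (1 − d)·b². -/
/-!
Writing `cos a = cos √(a ^ 2)`, the claim is Jensen's inequality for `t ↦ cos √t`, which is convex
on `[0, π ^ 2]`: its derivative `-(sin √t / √t) / 2` increases because `sin x / x` decreases on
`(0, π]`, i.e. `x cos x ≤ sin x` there. With `s = d a ^ 2 + (1 - d) b ^ 2` this gives
`cos √s ≤ d cos a + (1 - d) cos b`, and the antitone `arccos` turns it into `arccos (…) ≤ √s`.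
-/

open Real Set

lemma mul_cos_le_sin {x : ℝ} (hx₀ : 0 ≤ x) (hx : x ≤ π) : x * cos x ≤ sin x := by
  rcases lt_or_ge x (π / 2) with hlt | hge
  · have hcos : 0 < cos x := cos_pos_of_mem_Ioo ⟨by linarith [pi_pos], hlt⟩
    have := le_tan hx₀ hlt
    rwa [tan_eq_sin_div_cos, le_div_iff₀ hcos] at this
  · have hcos : cos x ≤ 0 := cos_nonpos_of_pi_div_two_le_of_le hge (by linarith)
    nlinarith [sin_nonneg_of_nonneg_of_le_pi hx₀ hx]

lemma antitoneOn_sin_div : AntitoneOn (fun x => sin x / x) (Ioc 0 π) := by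
  refine antitoneOn_of_hasDerivWithinAt_nonpos (convex_Ioc 0 π)
    (f' := fun x => (cos x * x - sin x * 1) / x ^ 2)
    (continuous_sin.continuousOn.div continuousOn_id fun x hx => hx.1.ne') (fun x hx => ?_)
    (fun x hx => ?_)
  all_goals rw [interior_Ioc] at hx
  · exact ((hasDerivAt_sin x).div (hasDerivAt_id x) hx.1.ne').hasDerivWithinAt
  · have := mul_cos_le_sin hx.1.le hx.2.le
    exact div_nonpos_of_nonpos_of_nonneg (by linarith) (sq_nonneg x)

lemma convexOn_cos_sqrt : ConvexOn ℝ (Icc 0 (π ^ 2)) (fun x => cos √x) := by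
  have hderiv : ∀ x ∈ interior (Icc 0 (π ^ 2)),
      HasDerivWithinAt (fun x => cos √x) (-(sin √x / √x) / 2) (interior (Icc 0 (π ^ 2))) x := by
    intro x hx
    rw [interior_Icc] at hx
    exact ((hasDerivAt_sqrt hx.1.ne').cos.congr_deriv (by ring)).hasDerivWithinAt
  refine MonotoneOn.convexOn_of_deriv (convex_Icc _ _)
    (continuous_cos.comp_continuousOn continuous_sqrt.continuousOn)
    (fun x hx => (hderiv x hx).differentiableWithinAt) ?_
  refine MonotoneOn.congr ?_ (deriv_eqOn isOpen_interior hderiv).symm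
  rw [interior_Icc]
  intro x hx y hy hxy
  have hmem : ∀ z ∈ Ioo 0 (π ^ 2), √z ∈ Ioc 0 π := fun z hz =>
    ⟨sqrt_pos.2 hz.1, sqrt_le_left pi_pos.le |>.mpr hz.2.le⟩
  have := antitoneOn_sin_div (hmem x hx) (hmem y hy) (sqrt_le_sqrt hxy)
  dsimp only
  linarith

lemma arccos_le_of_cos_le {x y : ℝ} (hx₀ : 0 ≤ x) (hx : x ≤ π) (h : cos x ≤ y) :
    arccos y ≤ x := by
  simpa [arccos_cos hx₀ hx] using arccos_le_arccos h

lemma sq_arccos_combination_le_of_mem_Icc_neg_pi_pi {a b d : ℝ} (ha : a ∈ Icc (-π) π)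
    (hb : b ∈ Icc (-π) π) (hd₀ : 0 ≤ d) (hd₁ : d ≤ 1) :
    arccos (d * cos a + (1 - d) * cos b) ^ 2 ≤ d * a ^ 2 + (1 - d) * b ^ 2 := by
  have hsq_mem : ∀ x ∈ Icc (-π) π, x ^ 2 ∈ Icc 0 (π ^ 2) := fun x hx =>
    ⟨sq_nonneg x, sq_le_sq' hx.1 hx.2⟩
  set s := d * a ^ 2 + (1 - d) * b ^ 2
  have hs : s ∈ Icc 0 (π ^ 2) :=
    convex_Icc _ _ (hsq_mem a ha) (hsq_mem b hb) hd₀ (by linarith) (by ring)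
  have hcos : cos √s ≤ d * cos a + (1 - d) * cos b := by
    simpa only [smul_eq_mul, sqrt_sq_eq_abs, cos_abs] using
      convexOn_cos_sqrt.2 (hsq_mem a ha) (hsq_mem b hb) hd₀ (by linarith) (by ring)
  have hsqrt : √s ≤ π := sqrt_le_left pi_pos.le |>.mpr hs.2
  rw [← le_sqrt (arccos_nonneg _) hs.1]
  exact arccos_le_of_cos_le (sqrt_nonneg s) hsqrt hcos

theorem sq_arccos_combination_le (a b d : ℝ)
    (ha : a ∈ Set.Icc (-(π / 2)) (π / 2)) (hb : b ∈ Set.Icc (-(π / 2)) (π / 2))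
    (hd : d ∈ Set.Icc (0 : ℝ) 1) :
    (Real.arccos (d * Real.cos a + (1 - d) * Real.cos b)) ^ 2
      ≤ d * a ^ 2 + (1 - d) * b ^ 2 := by
  have hsub : Icc (-(π / 2)) (π / 2) ⊆ Icc (-π) π :=
    Icc_subset_Icc (by linarith [pi_pos]) (by linarith [pi_pos])
  exact sq_arccos_combination_le_of_mem_Icc_neg_pi_pi (hsub ha) (hsub hb) hd.1 hd.2
end
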